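/- arXiv:1704.08582 — 2 statements merged into one kernel-verified Lean document; each statement's English description precedes it below -/
import Mathlib

section
/- Let m ≥ 1, let Ωₙ (n ∈ ℕ) and Ω be nonempty bounded open convex subsets of ℝ^m, and suppose the Hausdorff distance between the closure of Ωₙ and the closure of Ω tends to 0 as n → ∞. If K ⊆ Ω is compact, then K ⊆ Ωₙ for all sufficiently large n. -/
/-!
A closed convex set `C` that comes within `ε` of every point of a ball `closedBall x r` contains
the smaller ball `closedBall x (r - ε)`: a point of the smaller ball outside `C` is strictly
separated from `C` by a functional, and pushing it a distance `ε` in the direction that increases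
this functional yields a point of the big ball at distance `≥ ε` from `C`.

A compact `K ⊆ Ω` has a `δ`-neighbourhood inside `Ω`; once the Hausdorff distance is below
`δ / 2`, the closure of `Ωₙ` therefore contains `closedBall x (δ / 2)` for every `x ∈ K`, so
`K` lies in the interior of the closure of `Ωₙ`, which is `Ωₙ` since `Ωₙ` is open and convex.
-/

open Filter Metric Set

section NormedSpace

variable {E : Type*} [NormedAddCommGroup E] [NormedSpace ℝ E]

theorem Convex.exists_mem_closedBall_le_infDist_of_notMem {C : Set E} (hC : Convex ℝ C)
    (hCcl : IsClosed C) (hCne : C.Nonempty) {z : E} (hz : z ∉ C) {ε : ℝ} (hε : 0 < ε) :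
    ∃ q ∈ closedBall z ε, ε ≤ infDist q C := by
  obtain ⟨f, u, hfC, hfz⟩ := geometric_hahn_banach_closed_point hC hCcl hz
  -- `f` need not attain its norm; the slack `f z - u > 0` of the separation absorbs the defect
  obtain ⟨w, hw, hfw⟩ : ∃ w : E, ‖w‖ ≤ 1 ∧ ‖f‖ - (f z - u) / ε < f w := by
    obtain ⟨v, hv, hfv⟩ := f.exists_lt_apply_of_lt_opNorm
      (sub_lt_self ‖f‖ (div_pos (sub_pos.2 hfz) hε))
    rcases le_or_gt 0 (f v) with hv0 | hv0
    · exact ⟨v, hv.le, by rwa [Real.norm_of_nonneg hv0] at hfv⟩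
    · exact ⟨-v, by rw [norm_neg]; exact hv.le, by
        rwa [Real.norm_of_nonpos hv0.le, ← map_neg] at hfv⟩
  refine ⟨z + ε • w, ?_, (le_infDist hCne).2 fun c hc => ?_⟩
  · rw [mem_closedBall, dist_eq_norm, add_sub_cancel_left, norm_smul, Real.norm_of_nonneg hε.le]
    exact mul_le_of_le_one_right hε.le hw
  · have hgap : ‖f‖ * ε < f (z + ε • w) - f c := by
      have := mul_lt_mul_of_pos_left hfw hε
      rw [mul_sub, mul_div_cancel₀ _ hε.ne'] at this
      rw [map_add, map_smul, smul_eq_mul]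
      linarith [hfC c hc]
    have hlip : f (z + ε • w) - f c ≤ ‖f‖ * dist (z + ε • w) c := by
      rw [← map_sub, dist_eq_norm]
      exact (le_abs_self _).trans (f.le_opNorm _)
    exact (lt_of_mul_lt_mul_left (hgap.trans_le hlip) (norm_nonneg f)).le

theorem Convex.closedBall_sub_subset_of_forall_infDist_lt {C : Set E} (hC : Convex ℝ C)
    (hCcl : IsClosed C) (hCne : C.Nonempty) {x : E} {r ε : ℝ} (hε : 0 < ε)
    (h : ∀ q ∈ closedBall x r, infDist q C < ε) : closedBall x (r - ε) ⊆ C := by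
  intro z hz
  by_contra hzC
  obtain ⟨q, hq, hqC⟩ := hC.exists_mem_closedBall_le_infDist_of_notMem hCcl hCne hzC hε
  have hqx : q ∈ closedBall x r :=
    closedBall_subset_closedBall' (by linarith [mem_closedBall.1 hz]) hq
  exact (h q hqx).not_ge hqC

end NormedSpace

theorem compact_subset_eventually_of_hausdorff_tendsto_general
    (m : ℕ)
    (Ωn : ℕ → Set (EuclideanSpace ℝ (Fin m))) (Ω : Set (EuclideanSpace ℝ (Fin m)))
    (hne : ∀ n, (Ωn n).Nonempty) (hbdd : ∀ n, Bornology.IsBounded (Ωn n))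
    (hopen : ∀ n, IsOpen (Ωn n)) (hconv : ∀ n, Convex ℝ (Ωn n))
    (hΩbdd : Bornology.IsBounded Ω)
    (hΩopen : IsOpen Ω)
    (hH : Tendsto (fun n => Metric.hausdorffDist (closure (Ωn n)) (closure Ω)) atTop (nhds 0))
    (K : Set (EuclideanSpace ℝ (Fin m))) (hK : IsCompact K) (hKΩ : K ⊆ Ω) :
    ∀ᶠ n in atTop, K ⊆ Ωn n := by
  obtain ⟨δ, hδ, hKδ⟩ := hK.exists_cthickening_subset_open hΩopen hKΩ
  filter_upwards [hH.eventually_lt_const (half_pos hδ)] with n hn x hx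
  have hfin : hausdorffEDist (closure Ω) (closure (Ωn n)) ≠ ⊤ :=
    hausdorffEDist_ne_top_of_nonempty_of_bounded ⟨x, subset_closure (hKΩ hx)⟩
      (hne n).closure hΩbdd.closure (hbdd n).closure
  have hnear : ∀ q ∈ closedBall x δ, infDist q (closure (Ωn n)) < δ / 2 := fun q hq =>
    (infDist_le_hausdorffDist_of_mem
      (subset_closure (hKδ (closedBall_subset_cthickening hx δ hq))) hfin).trans_lt
      (hausdorffDist_comm.trans_lt hn)
  have hball : closedBall x (δ - δ / 2) ⊆ closure (Ωn n) :=
    (hconv n).closure.closedBall_sub_subset_of_forall_infDist_lt isClosed_closure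
      (hne n).closure (half_pos hδ) hnear
  have hx_int : x ∈ interior (closure (Ωn n)) :=
    mem_interior_iff_mem_nhds.2 (mem_of_superset (closedBall_mem_nhds x (by linarith)) hball)
  rwa [(hconv n).interior_closure_eq_interior_of_nonempty_interior
    ((hopen n).interior_eq.symm ▸ hne n), (hopen n).interior_eq] at hx_int

/-- If `Ωₙ` and `Ω` are nonempty bounded open convex subsets of `ℝ^m` and the closures of the
`Ωₙ` converge to the closure of `Ω` in the Hausdorff distance, then every compact subset of `Ω`
is contained in `Ωₙ` for all sufficiently large `n`. -/
theorem compact_subset_eventually_of_hausdorff_tendsto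
    (m : ℕ) (hm : 1 ≤ m)
    (Ωn : ℕ → Set (EuclideanSpace ℝ (Fin m))) (Ω : Set (EuclideanSpace ℝ (Fin m)))
    (hne : ∀ n, (Ωn n).Nonempty) (hbdd : ∀ n, Bornology.IsBounded (Ωn n))
    (hopen : ∀ n, IsOpen (Ωn n)) (hconv : ∀ n, Convex ℝ (Ωn n))
    (hΩne : Ω.Nonempty) (hΩbdd : Bornology.IsBounded Ω)
    (hΩopen : IsOpen Ω) (hΩconv : Convex ℝ Ω)
    (hH : Tendsto (fun n => Metric.hausdorffDist (closure (Ωn n)) (closure Ω)) atTop (nhds 0))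
    (K : Set (EuclideanSpace ℝ (Fin m))) (hK : IsCompact K) (hKΩ : K ⊆ Ω) :
    ∀ᶠ n in atTop, K ⊆ Ωn n :=
  compact_subset_eventually_of_hausdorff_tendsto_general m Ωn Ω hne hbdd hopen hconv hΩbdd hΩopen hH
    K hK hKΩ
end

section
/- Let m ≥ 1, let Ωₙ (n ∈ ℕ) and Ω be nonempty bounded open convex subsets of ℝ^m, and suppose the Hausdorff distance between the closure of Ωₙ and the closure of Ω tends to 0 as n → ∞. If V ⊆ ℝ^m is an affine subspace with V ∩ Ω ≠ ∅, then Ωₙ ∩ V is nonempty for all sufficiently large n and the Hausdorff distance between closure(Ωₙ ∩ V) and closure(Ω ∩ V) tends to 0 as n → ∞. -/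
/-!
Pick `x₀ ∈ V ∩ Ω` and a ball `B(x₀, r) ⊆ Ω`. Once `d_H(Ωₙ, Ω) < r / 2`, Hahn–Banach separation
shows that the convex set `Ωₙ` contains `B(x₀, r / 2)`. If a convex set `A` contains `B(x₀, s)` and
a point `x ∈ V` lies within `ε` of some `y ∈ A`, then the point of `[x, x₀]` at parameter
`ε / (ε + s)` is a convex combination of `y` and a point of `B(x₀, s)`, so `x` lies within
`ε / s * |x - x₀|` of `A ∩ V`. Applied in both directions this bounds `d_H(Ωₙ ∩ V, Ω ∩ V)` by a
constant multiple of `d_H(Ωₙ, Ω)`.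
-/

open Filter Metric Set Topology

section

theorem Metric.subset_thickening_of_hausdorffDist_lt {X : Type*} [PseudoMetricSpace X]
    {s t : Set X} {r : ℝ} (H : hausdorffDist s t < r) (fin : hausdorffEDist s t ≠ ⊤) :
    s ⊆ thickening r t :=
  fun _ hx ↦ mem_thickening_iff.2 (exists_dist_lt_of_hausdorffDist_lt hx H fin)

variable {E : Type*} [NormedAddCommGroup E] [NormedSpace ℝ E]

theorem Convex.ball_subset_of_isClosed_of_ball_subset_thickening {C : Set E} (hC : Convex ℝ C)
    (hCc : IsClosed C) {x₀ : E} {r ε : ℝ} (hε : 0 < ε)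
    (h : ball x₀ r ⊆ Metric.thickening ε C) :
    ball x₀ (r - ε) ⊆ C := by
  intro x hx
  by_contra hxC
  obtain ⟨f, u, hfC, hfx⟩ := geometric_hahn_banach_closed_point hC hCc hxC
  obtain ⟨w, hw, hfw⟩ : ∃ w : E, ‖w‖ < 1 ∧ ‖f‖ - (f x - u) / ε < f w := by
    obtain ⟨w, hw, hfw⟩ := f.exists_lt_apply_of_lt_opNorm
      (sub_lt_self ‖f‖ (div_pos (sub_pos.2 hfx) hε))
    rcases lt_abs.1 hfw with hfw | hfw
    exacts [⟨w, hw, hfw⟩, ⟨-w, by rwa [norm_neg], by rwa [map_neg]⟩]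
  have hx' : x + ε • w ∈ ball x₀ r := by
    have hεw : ‖ε • w‖ < ε := by
      rw [norm_smul, Real.norm_of_nonneg hε.le]; exact mul_lt_of_lt_one_right hε hw
    rw [mem_ball, dist_eq_norm] at hx ⊢
    calc ‖x + ε • w - x₀‖ ≤ ‖x - x₀‖ + ‖ε • w‖ := by
          rw [add_sub_right_comm]; exact norm_add_le _ _
      _ < r := by linarith
  obtain ⟨a, ha, hdist⟩ := mem_thickening_iff.1 (h hx')
  -- moving `x` by `ε` in a direction almost norming `f` keeps it `ε`-far from `C`
  have hfar : ε * ‖f‖ < f (x + ε • w - a) := by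
    have hfa := hfC a ha
    have hεfw := mul_lt_mul_of_pos_left hfw hε
    rw [mul_sub, mul_div_cancel₀ _ hε.ne'] at hεfw
    rw [map_sub, map_add, map_smul, smul_eq_mul]
    linarith
  have hnear : f (x + ε • w - a) ≤ ε * ‖f‖ := by
    calc f (x + ε • w - a) ≤ ‖f‖ * ‖x + ε • w - a‖ :=
          (le_abs_self _).trans (f.le_opNorm _)
      _ ≤ ‖f‖ * ε := by
          rw [← dist_eq_norm]; exact mul_le_mul_of_nonneg_left hdist.le (norm_nonneg f)
      _ = ε * ‖f‖ := mul_comm _ _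
  exact hfar.not_ge hnear

theorem Convex.ball_subset_of_isOpen_of_ball_subset_thickening {C : Set E} (hC : Convex ℝ C)
    (hCo : IsOpen C) {x₀ : E} {r ε : ℝ} (hε : 0 < ε)
    (h : ball x₀ r ⊆ Metric.thickening ε C) :
    ball x₀ (r - ε) ⊆ C := by
  intro x hx
  have hcl : ball x₀ (r - ε) ⊆ closure C :=
    hC.closure.ball_subset_of_isClosed_of_ball_subset_thickening isClosed_closure hε
      (h.trans (thickening_subset_of_subset ε subset_closure))
  have hne : (interior C).Nonempty := by
    rw [hCo.interior_eq, ← closure_nonempty_iff]; exact ⟨x, hcl hx⟩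
  rw [← hCo.interior_eq, ← hC.interior_closure_eq_interior_of_nonempty_interior hne]
  exact interior_maximal hcl isOpen_ball hx

theorem Convex.exists_mem_inter_affineSubspace_dist_le {A : Set E} (hA : Convex ℝ A)
    {V : AffineSubspace ℝ E} {x₀ x y : E} {s ε : ℝ} (hs : 0 < s) (hball : ball x₀ s ⊆ A)
    (hx₀ : x₀ ∈ V) (hx : x ∈ V) (hy : y ∈ A) (hxy : dist x y < ε) :
    ∃ z ∈ A ∩ V, dist x z ≤ ε / s * dist x x₀ := by
  have hε : 0 < ε := dist_nonneg.trans_lt hxy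
  set t := ε / (ε + s)
  set w := x₀ + (s / ε) • (x - y)
  have hw : w ∈ A := hball <| by
    rw [mem_ball, dist_eq_norm, add_sub_cancel_left, norm_smul,
      Real.norm_of_nonneg (by positivity), ← dist_eq_norm, div_mul_comm, ← lt_div_iff₀ hs,
      div_self hs.ne']
    exact (div_lt_one hε).2 hxy
  have ht₀ : 0 ≤ t := by positivity
  have ht₁ : t ≤ ε / s := div_le_div_of_nonneg_left hε.le hs (by linarith)
  have hts : t * (s / ε) = 1 - t := by simp only [t]; field_simp; ring
  have hz : AffineMap.lineMap x x₀ t = (1 - t) • y + t • w := by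
    rw [AffineMap.lineMap_apply_module, smul_add, smul_smul, hts]
    module
  refine ⟨AffineMap.lineMap x x₀ t, ⟨?_, AffineMap.lineMap_mem t hx hx₀⟩, ?_⟩
  · rw [hz]
    exact hA hy hw (by rw [← hts]; positivity) ht₀ (by ring)
  · rw [dist_left_lineMap, Real.norm_of_nonneg ht₀]
    gcongr

theorem Convex.infDist_inter_affineSubspace_le {A : Set E} (hA : Convex ℝ A)
    {V : AffineSubspace ℝ E} {x₀ x : E} {s : ℝ} (hs : 0 < s) (hball : ball x₀ s ⊆ A)
    (hx₀ : x₀ ∈ V) (hx : x ∈ V) :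
    infDist x (A ∩ V) ≤ infDist x A / s * dist x x₀ := by
  have hlim : Tendsto (fun ε ↦ ε / s * dist x x₀) (𝓝[>] (infDist x A))
      (𝓝 (infDist x A / s * dist x x₀)) :=
    ((continuous_id.div_const s).mul_const _).continuousWithinAt
  refine ge_of_tendsto hlim (eventually_nhdsWithin_of_forall fun ε hε ↦ ?_)
  obtain ⟨y, hy, hxy⟩ :=
    (infDist_lt_iff ⟨x₀, hball (mem_ball_self hs)⟩).1 (mem_Ioi.1 hε)
  obtain ⟨z, hz, hxz⟩ := hA.exists_mem_inter_affineSubspace_dist_le hs hball hx₀ hx hy hxy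
  exact (infDist_le_dist_of_mem hz).trans hxz

theorem Convex.hausdorffDist_inter_affineSubspace_le {A B : Set E} (hA : Convex ℝ A)
    (hB : Convex ℝ B) {V : AffineSubspace ℝ E} {x₀ : E} {s R : ℝ} (hs : 0 < s)
    (hAs : ball x₀ s ⊆ A) (hBs : ball x₀ s ⊆ B) (hAR : A ⊆ closedBall x₀ R)
    (hBR : B ⊆ closedBall x₀ R) (hx₀ : x₀ ∈ V) :
    hausdorffDist (A ∩ V) (B ∩ V) ≤ hausdorffDist A B / s * R := by
  have hx₀A : x₀ ∈ A := hAs (mem_ball_self hs)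
  have hR : 0 ≤ R := dist_self x₀ ▸ mem_closedBall.1 (hAR hx₀A)
  have hfin : hausdorffEDist A B ≠ ⊤ :=
    hausdorffEDist_ne_top_of_nonempty_of_bounded ⟨x₀, hx₀A⟩
      ⟨x₀, hBs (mem_ball_self hs)⟩ (isBounded_closedBall.subset hAR)
      (isBounded_closedBall.subset hBR)
  have key : ∀ {P Q : Set E}, Convex ℝ Q → ball x₀ s ⊆ Q → P ⊆ closedBall x₀ R →
      hausdorffEDist P Q ≠ ⊤ → ∀ x ∈ P ∩ V,
        infDist x (Q ∩ V) ≤ hausdorffDist P Q / s * R := by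
    rintro P Q hQ hQs hPR hPQ x ⟨hxP, hxV⟩
    calc infDist x (Q ∩ V) ≤ infDist x Q / s * dist x x₀ :=
          hQ.infDist_inter_affineSubspace_le hs hQs hx₀ hxV
      _ ≤ hausdorffDist P Q / s * R := by
          refine mul_le_mul ?_ (mem_closedBall.1 (hPR hxP)) dist_nonneg
            (div_nonneg hausdorffDist_nonneg hs.le)
          exact div_le_div_of_nonneg_right (infDist_le_hausdorffDist_of_mem hxP hPQ) hs.le
  refine hausdorffDist_le_of_infDist (mul_nonneg (div_nonneg hausdorffDist_nonneg hs.le) hR)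
    (key hB hBs hAR hfin) ?_
  rw [hausdorffDist_comm]
  exact key hA hAs hBR (by rwa [hausdorffEDist_comm])

end

theorem hausdorff_tendsto_inter_affineSubspace_general
    (m : ℕ)
    (Ωn : ℕ → Set (EuclideanSpace ℝ (Fin m))) (Ω : Set (EuclideanSpace ℝ (Fin m)))
    (hne : ∀ n, (Ωn n).Nonempty) (hbdd : ∀ n, Bornology.IsBounded (Ωn n))
    (hopen : ∀ n, IsOpen (Ωn n)) (hconv : ∀ n, Convex ℝ (Ωn n))
    (hΩbdd : Bornology.IsBounded Ω)
    (hΩopen : IsOpen Ω) (hΩconv : Convex ℝ Ω)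
    (hH : Tendsto (fun n => Metric.hausdorffDist (closure (Ωn n)) (closure Ω)) atTop (nhds 0))
    (V : AffineSubspace ℝ (EuclideanSpace ℝ (Fin m)))
    (hint : ((V : Set (EuclideanSpace ℝ (Fin m))) ∩ Ω).Nonempty) :
    (∀ᶠ n in atTop, (Ωn n ∩ (V : Set (EuclideanSpace ℝ (Fin m)))).Nonempty) ∧
      Tendsto
        (fun n => Metric.hausdorffDist
          (closure (Ωn n ∩ (V : Set (EuclideanSpace ℝ (Fin m)))))
          (closure (Ω ∩ (V : Set (EuclideanSpace ℝ (Fin m))))))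
        atTop (nhds 0) := by
  obtain ⟨x₀, hx₀V, hx₀Ω⟩ := hint
  obtain ⟨r, hr, hball⟩ := isOpen_iff.1 hΩopen x₀ hx₀Ω
  obtain ⟨R, hR⟩ := hΩbdd.subset_ball x₀
  have hd : Tendsto (fun n ↦ hausdorffDist (Ωn n) Ω) atTop (𝓝 0) := by
    simpa only [hausdorffDist_closure] using hH
  have hfin n : hausdorffEDist (Ωn n) Ω ≠ ⊤ :=
    hausdorffEDist_ne_top_of_nonempty_of_bounded (hne n) ⟨x₀, hx₀Ω⟩ (hbdd n) hΩbdd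
  have hclose : ∀ᶠ n in atTop, hausdorffDist (Ωn n) Ω < r / 2 :=
    hd.eventually (gt_mem_nhds (half_pos hr))
  have hballn n (hn : hausdorffDist (Ωn n) Ω < r / 2) : ball x₀ (r / 2) ⊆ Ωn n := by
    rw [hausdorffDist_comm] at hn
    have := (hconv n).ball_subset_of_isOpen_of_ball_subset_thickening (hopen n) (half_pos hr)
      (hball.trans (subset_thickening_of_hausdorffDist_lt hn
        (by rw [hausdorffEDist_comm]; exact hfin n)))
    rwa [sub_half] at this
  have hboundn n (hn : hausdorffDist (Ωn n) Ω < r / 2) : Ωn n ⊆ closedBall x₀ (r / 2 + R) :=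
    (subset_thickening_of_hausdorffDist_lt hn (hfin n)).trans
      ((thickening_subset_of_subset _ hR).trans
        ((thickening_ball x₀ _ _).trans ball_subset_closedBall))
  refine ⟨hclose.mono fun n hn ↦ ⟨x₀, hballn n hn (mem_ball_self (half_pos hr)), hx₀V⟩, ?_⟩
  have hbound : ∀ᶠ n in atTop, hausdorffDist (closure (Ωn n ∩ V)) (closure (Ω ∩ V)) ≤
      hausdorffDist (Ωn n) Ω / (r / 2) * (r / 2 + R) := hclose.mono fun n hn ↦ by
    rw [hausdorffDist_closure]
    refine (hconv n).hausdorffDist_inter_affineSubspace_le hΩconv (half_pos hr) (hballn n hn)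
      ((ball_subset_ball (half_le_self hr.le)).trans hball) (hboundn n hn) ?_ hx₀V
    exact hR.trans (ball_subset_ball (by linarith) |>.trans ball_subset_closedBall)
  have hlim :
      Tendsto (fun n ↦ hausdorffDist (Ωn n) Ω / (r / 2) * (r / 2 + R)) atTop (𝓝 0) := by
    simpa using (hd.div_const _).mul_const _
  exact squeeze_zero' (.of_forall fun _ ↦ hausdorffDist_nonneg) hbound hlim

/-- If `Ωₙ` and `Ω` are nonempty bounded open convex subsets of `ℝ^m` whose closures converge
in the Hausdorff distance, and `V` is an affine subspace of `ℝ^m` meeting `Ω`, then `Ωₙ ∩ V` is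
nonempty for all sufficiently large `n` and the closures of `Ωₙ ∩ V` converge to the closure of
`Ω ∩ V` in the Hausdorff distance. -/
theorem hausdorff_tendsto_inter_affineSubspace
    (m : ℕ) (hm : 1 ≤ m)
    (Ωn : ℕ → Set (EuclideanSpace ℝ (Fin m))) (Ω : Set (EuclideanSpace ℝ (Fin m)))
    (hne : ∀ n, (Ωn n).Nonempty) (hbdd : ∀ n, Bornology.IsBounded (Ωn n))
    (hopen : ∀ n, IsOpen (Ωn n)) (hconv : ∀ n, Convex ℝ (Ωn n))
    (hΩne : Ω.Nonempty) (hΩbdd : Bornology.IsBounded Ω)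
    (hΩopen : IsOpen Ω) (hΩconv : Convex ℝ Ω)
    (hH : Tendsto (fun n => Metric.hausdorffDist (closure (Ωn n)) (closure Ω)) atTop (nhds 0))
    (V : AffineSubspace ℝ (EuclideanSpace ℝ (Fin m)))
    (hint : ((V : Set (EuclideanSpace ℝ (Fin m))) ∩ Ω).Nonempty) :
    (∀ᶠ n in atTop, (Ωn n ∩ (V : Set (EuclideanSpace ℝ (Fin m)))).Nonempty) ∧
      Tendsto
        (fun n => Metric.hausdorffDist
          (closure (Ωn n ∩ (V : Set (EuclideanSpace ℝ (Fin m)))))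
          (closure (Ω ∩ (V : Set (EuclideanSpace ℝ (Fin m))))))
        atTop (nhds 0) :=
  hausdorff_tendsto_inter_affineSubspace_general m Ωn Ω hne hbdd hopen hconv hΩbdd hΩopen hΩconv hH
    V hint
end
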